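/- arXiv:2407.18547 — 4 statements merged into one kernel-verified Lean document; each statement's English description precedes it below -/
import Mathlib

section
/- For every vector of agent positions x ∈ [0,1]^n, every vector of facility locations y ∈ [0,1]^m, and every capacity vector k ∈ ℕ^m, the First-Come-First-Served game associated with (x, y, k) admits at least one pure Nash Equilibrium. -/
open scoped Classical

noncomputable section

/-- Agent `i'` precedes agent `i` at a facility located at `y`: it is strictly closer,
or equally close with higher priority (smaller index). -/
def Prec {n : ℕ} (x : Fin n → ℝ) (y : ℝ) (i' i : Fin n) : Prop :=
  |x i' - y| < |x i - y| ∨ (|x i' - y| = |x i - y| ∧ i' < i)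

/-- Utility of agent `i` in the FCFS game: positions `x`, facility locations `y`,
capacities `k`, strategy profile `s`.  Agent `i` is served by facility `s i` iff fewer
than `k (s i)` agents selecting `s i` precede it. -/
def utility {n m : ℕ} (x : Fin n → ℝ) (y : Fin m → ℝ) (k : Fin m → ℕ)
    (s : Fin n → Fin m) (i : Fin n) : ℝ :=
  if {i' | s i' = s i ∧ Prec x (y (s i)) i' i}.ncard < k (s i)
  then 1 - |x i - y (s i)| else 0

/-- Pure Nash equilibrium of the FCFS game. -/
def isNE {n m : ℕ} (x : Fin n → ℝ) (y : Fin m → ℝ) (k : Fin m → ℕ)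
    (s : Fin n → Fin m) : Prop :=
  ∀ (i : Fin n) (j : Fin m),
    utility x y k (Function.update s i j) i ≤ utility x y k s i

/-- Social welfare of a strategy profile. -/
def SW {n m : ℕ} (x : Fin n → ℝ) (y : Fin m → ℝ) (k : Fin m → ℕ)
    (s : Fin n → Fin m) : ℝ :=
  ∑ i, utility x y k s i

def InUnit {N : ℕ} (x : Fin N → ℝ) : Prop := ∀ i, x i ∈ Set.Icc (0 : ℝ) 1

/-- The `i`-th (0-based) smallest entry of `x` (junk value `0` out of range). -/
def sortedVal {n : ℕ} (x : Fin n → ℝ) (i : ℕ) : ℝ :=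
  if h : i < n then x (Tuple.sort x ⟨i, h⟩) else 0

/-- The 1-based index `⌊(n-1)v⌋ + 1` used by the percentile mechanism. -/
def percIdx (n : ℕ) (v : ℝ) : ℕ := ⌊((n : ℝ) - 1) * v⌋.toNat + 1

/-- The location selected by the percentile `v`: the `(⌊(n-1)v⌋+1)`-th sorted report. -/
def percLoc {n : ℕ} (x : Fin n → ℝ) (v : ℝ) : ℝ :=
  sortedVal x (⌊((n : ℝ) - 1) * v⌋.toNat)

/-- The percentile mechanism induced by the percentile vector `v`. -/
def PM {n m : ℕ} (v : Fin m → ℝ) : (Fin n → ℝ) → Fin m → ℝ :=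
  fun x j => percLoc x (v j)

/-- A mechanism is Equilibrium Stable if on every instance all pure Nash equilibria of the
induced FCFS game yield the same Social Welfare. -/
def EquilibriumStable {n m : ℕ} (k : Fin m → ℕ)
    (M : (Fin n → ℝ) → Fin m → ℝ) : Prop :=
  ∀ x, InUnit x → ∀ s s', isNE x (M x) k s → isNE x (M x) k s' →
    SW x (M x) k s = SW x (M x) k s'

/-- A mechanism is absolutely truthful if no agent can increase its best-response utility
by misreporting, whatever the fixed strategies of the others. -/
def AbsolutelyTruthful {n m : ℕ} (k : Fin m → ℕ)
    (M : (Fin n → ℝ) → Fin m → ℝ) : Prop :=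
  ∀ x, InUnit x → ∀ (i : Fin n) (x' : ℝ), x' ∈ Set.Icc (0 : ℝ) 1 →
    ∀ s : Fin n → Fin m,
      (⨆ si : Fin m, utility x (M (Function.update x i x')) k (Function.update s i si) i) ≤
      (⨆ si : Fin m, utility x (M x) k (Function.update s i si) i)

/-- Optimal Social Welfare over facility locations in `[0,1]^m` and Nash equilibria. -/
def SWopt {n m : ℕ} (k : Fin m → ℕ) (x : Fin n → ℝ) : ℝ :=
  sSup {w | ∃ y : Fin m → ℝ, InUnit y ∧ ∃ s, isNE x y k s ∧ w = SW x y k s}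

/-- Social Welfare achieved by a mechanism (common value over all NE for ES mechanisms). -/
def SWmech {n m : ℕ} (k : Fin m → ℕ) (M : (Fin n → ℝ) → Fin m → ℝ)
    (x : Fin n → ℝ) : ℝ :=
  sSup {w | ∃ s, isNE x (M x) k s ∧ w = SW x (M x) k s}

/-- Approximation ratio of a mechanism. -/
def approxRatio {n m : ℕ} (k : Fin m → ℕ) (M : (Fin n → ℝ) → Fin m → ℝ) : ℝ :=
  sSup {r | ∃ x : Fin n → ℝ, InUnit x ∧ r = SWopt k x / SWmech k M x}

end

/-!
Order agent–facility pairs by distance, then by agent priority, and score a profile by the set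
of pairs `(i, s i)` that are served, compared colexicographically with the best pair weighing
most. A profitable deviation of agent `i` to facility `j` makes `(i, j)` served, and every pair
it unserves — `i`'s old pair or an agent that `i` now precedes at `j` — ranks below `(i, j)`.
So the score strictly increases, and a profile of maximal score is a Nash equilibrium.
-/

namespace FCFSGame

open Finset Function

variable {n m : ℕ} (x : Fin n → ℝ) (y : Fin m → ℝ) (k : Fin m → ℕ)

def pairKey (p : Fin n × Fin m) : ℝ ×ₗ (Fin n ×ₗ Fin m) :=
  toLex (|x p.1 - y p.2|, toLex p)

lemma pairKey_injective : Injective (pairKey x y) := fun p q h => by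
  simp only [pairKey, toLex_inj, Prod.mk.injEq] at h
  exact h.2

variable {x y}

lemma pairKey_lt_of_dist_lt {i : Fin n} {j j' : Fin m} (h : |x i - y j| < |x i - y j'|) :
    pairKey x y (i, j) < pairKey x y (i, j') :=
  Prod.Lex.lt_iff.mpr (Or.inl h)

lemma pairKey_lt_of_prec {i i' : Fin n} {j : Fin m} (h : Prec x (y j) i i') :
    pairKey x y (i, j) < pairKey x y (i', j) := by
  rcases h with h | ⟨h, h'⟩
  · exact Prod.Lex.lt_iff.mpr (Or.inl h)
  · exact Prod.Lex.lt_iff.mpr (Or.inr ⟨h, Prod.Lex.lt_iff.mpr (Or.inl h')⟩)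

variable (x y)

def Served (s : Fin n → Fin m) (i : Fin n) : Prop :=
  {i' | s i' = s i ∧ Prec x (y (s i)) i' i}.ncard < k (s i)

lemma utility_eq_ite (s : Fin n → Fin m) (i : Fin n) :
    utility x y k s i = if Served x y k s i then 1 - |x i - y (s i)| else 0 := by
  unfold utility Served
  congr

noncomputable def servedPairs (s : Fin n → Fin m) : Finset (Fin n × Fin m) :=
  univ.filter fun p => s p.1 = p.2 ∧ Served x y k s p.1

/-- Keys are dualized so that the colex order is decided by the closest pair where two profiles
differ. -/
noncomputable def potential (s : Fin n → Fin m) :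
    Colex (Finset (ℝ ×ₗ (Fin n ×ₗ Fin m))ᵒᵈ) :=
  toColex ((servedPairs x y k s).image (OrderDual.toDual ∘ pairKey x y))

variable {x y k}

lemma mem_servedPairs {s : Fin n → Fin m} {p : Fin n × Fin m} :
    p ∈ servedPairs x y k s ↔ s p.1 = p.2 ∧ Served x y k s p.1 := by
  simp [servedPairs]

lemma served_update_of_served {s : Fin n → Fin m} {i i' : Fin n} {j : Fin m} (hi : i' ≠ i)
    (h : Served x y k s i') (hprec : ¬(s i' = j ∧ Prec x (y j) i i')) :
    Served x y k (update s i j) i' := by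
  unfold Served at h ⊢
  rw [update_of_ne hi]
  refine lt_of_le_of_lt (Set.ncard_le_ncard ?_ (Set.toFinite _)) h
  rintro i'' ⟨hs, hp⟩
  rcases eq_or_ne i'' i with rfl | hne
  · rw [update_self] at hs
    exact absurd ⟨hs.symm, hs ▸ hp⟩ hprec
  · exact ⟨by rwa [update_of_ne hne] at hs, hp⟩

lemma served_of_utility_lt {s : Fin n → Fin m} {i : Fin n} {j : Fin m}
    (hdist : |x i - y (s i)| ≤ 1) (h : utility x y k s i < utility x y k (update s i j) i) :
    Served x y k (update s i j) i ∧ s i ≠ j ∧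
      (Served x y k s i → |x i - y j| < |x i - y (s i)|) := by
  rw [utility_eq_ite, utility_eq_ite, update_self] at h
  have hserved : Served x y k (update s i j) i := by
    by_contra hns
    rw [if_neg hns] at h
    split_ifs at h <;> linarith
  refine ⟨hserved, fun hsj => ?_, fun hs => ?_⟩
  · rw [← hsj, update_eq_self] at h
    exact lt_irrefl _ h
  · rw [if_pos hs, if_pos hserved] at h
    linarith

lemma potential_lt_of_utility_lt {s : Fin n → Fin m} {i : Fin n} {j : Fin m}
    (hdist : |x i - y (s i)| ≤ 1) (h : utility x y k s i < utility x y k (update s i j) i) :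
    potential x y k s < potential x y k (update s i j) := by
  obtain ⟨hserved, hne, hcloser⟩ := served_of_utility_lt hdist h
  have hinj : Injective (OrderDual.toDual ∘ pairKey x y) :=
    OrderDual.toDual.injective.comp (pairKey_injective x y)
  rw [potential, potential, Colex.toColex_lt_toColex_iff_exists_forall_lt]
  have hnew : (i, j) ∈ servedPairs x y k (update s i j) :=
    mem_servedPairs.mpr ⟨update_self i j s, hserved⟩
  refine ⟨_, mem_image_of_mem _ hnew,
    fun hold => hne (mem_servedPairs.mp (hinj.mem_finset_image.mp hold)).1, ?_⟩
  intro b hb hnot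
  obtain ⟨⟨i', j'⟩, hp, rfl⟩ := mem_image.mp hb
  rw [hinj.mem_finset_image] at hnot
  obtain ⟨hj', hs⟩ := mem_servedPairs.mp hp
  dsimp only at hj' hs
  subst hj'
  refine OrderDual.toDual_lt_toDual.mpr ?_
  rcases eq_or_ne i' i with rfl | hi
  · exact pairKey_lt_of_dist_lt (hcloser hs)
  · obtain ⟨rfl, hprec⟩ : s i' = j ∧ Prec x (y j) i i' := by
      by_contra hkept
      exact hnot (mem_servedPairs.mpr ⟨update_of_ne hi .., served_update_of_served hi hs hkept⟩)
    exact pairKey_lt_of_prec hprec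

end FCFSGame

theorem fcfs_game_has_pure_NE_general (n m : ℕ) (hm : 0 < m)
    (x : Fin n → ℝ) (hx : InUnit x) (y : Fin m → ℝ) (hy : InUnit y)
    (k : Fin m → ℕ) :
    ∃ s : Fin n → Fin m, isNE x y k s := by
  have hdist (i j) : |x i - y j| ≤ 1 := Real.dist_le_of_mem_Icc_01 (hx i) (hy j)
  have : Nonempty (Fin n → Fin m) := ⟨fun _ => ⟨0, hm⟩⟩
  obtain ⟨s, hmax⟩ := Finite.exists_max (FCFSGame.potential x y k)
  exact ⟨s, fun i j => not_lt.mp fun h =>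
    (hmax _).not_gt (FCFSGame.potential_lt_of_utility_lt (hdist i (s i)) h)⟩

/-- For every vector of agent positions `x ∈ [0,1]^n`, every vector of
facility locations `y ∈ [0,1]^m`, and every capacity vector `k`, the FCFS game associated
with `(x, y, k)` admits at least one pure Nash equilibrium. -/
theorem fcfs_game_has_pure_NE (n m : ℕ) (hm : 0 < m)
    (x : Fin n → ℝ) (hx : InUnit x) (y : Fin m → ℝ) (hy : InUnit y)
    (k : Fin m → ℕ) (hk : ∀ j, 0 < k j) :
    ∃ s : Fin n → Fin m, isNE x y k s :=
  fcfs_game_has_pure_NE_general n m hm x hx y hy k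
end

section
/- For every percentile vector v ∈ [0,1]^m, the percentile mechanism PM_v is absolutely truthful: for every agent i, every true position profile x ∈ [0,1]^n, every misreport x_i′ ∈ [0,1], and every fixed profile s_{−i} of the other agents' strategies, the maximum utility agent i can obtain over its own strategies when the facilities are placed at PM_v(x) is at least the maximum utility it can obtain over its own strategies when the facilities are placed at PM_v(x_i′, x_{−i}). -/
open scoped Classical

section AuxLemmas

open Finset

lemma aux_floor_toNat_lt {n : ℕ} (hn : 0 < n) {v : ℝ} (hv : v ∈ Set.Icc (0:ℝ) 1) :
    (⌊((n:ℝ)-1)*v⌋).toNat < n := by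
  have hn1 : (1:ℝ) ≤ (n:ℝ) := by exact_mod_cast hn
  have h1 : ((n:ℝ)-1)*v ≤ (n:ℝ)-1 := by nlinarith [hv.1, hv.2]
  have h3 : (⌊((n:ℝ)-1)*v⌋ : ℝ) ≤ (n:ℝ) - 1 := le_trans (Int.floor_le _) h1
  have h4 : ⌊((n:ℝ)-1)*v⌋ ≤ (n:ℤ) - 1 := by exact_mod_cast h3
  omega

lemma aux_card_filter_val_lt (n q : ℕ) (hq : q ≤ n) :
    (Finset.filter (fun l : Fin n => (l : ℕ) < q) univ).card = q := by
  have himg : ((Finset.filter (fun l : Fin n => (l : ℕ) < q) univ).image Fin.val)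
      = Finset.range q := by
    ext a
    simp only [mem_image, mem_filter, mem_univ, true_and, Finset.mem_range]
    constructor
    · rintro ⟨l, hl, rfl⟩; exact hl
    · intro ha; exact ⟨⟨a, lt_of_lt_of_le ha hq⟩, ha, rfl⟩
  calc (Finset.filter (fun l : Fin n => (l : ℕ) < q) univ).card
      = ((Finset.filter (fun l : Fin n => (l : ℕ) < q) univ).image Fin.val).card :=
        (Finset.card_image_of_injective _ Fin.val_injective).symm
    _ = q := by rw [himg, Finset.card_range]

lemma aux_sortedVal_lt_card {n : ℕ} (x : Fin n → ℝ) (q : ℕ) (hq : q < n) :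
    (Finset.filter (fun j => x j < sortedVal x q) univ).card ≤ q := by
  have ht : sortedVal x q = x (Tuple.sort x ⟨q, hq⟩) := by rw [sortedVal, dif_pos hq]
  have hsub : (Finset.filter (fun j => x j < sortedVal x q) univ) ⊆
      (Finset.filter (fun l : Fin n => (l : ℕ) < q) univ).image (Tuple.sort x) := by
    intro j hj
    rw [Finset.mem_filter] at hj
    rw [Finset.mem_image]
    refine ⟨(Tuple.sort x).symm j, ?_, by simp⟩
    rw [Finset.mem_filter]
    refine ⟨Finset.mem_univ _, ?_⟩
    by_contra hcon
    push_neg at hcon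
    have hle : (⟨q, hq⟩ : Fin n) ≤ (Tuple.sort x).symm j := by
      rw [Fin.le_def]; exact hcon
    have := Tuple.monotone_sort x hle
    simp only [Function.comp_apply, Equiv.apply_symm_apply] at this
    rw [ht] at hj
    exact absurd hj.2 (not_lt.mpr this)
  calc (Finset.filter (fun j => x j < sortedVal x q) univ).card
      ≤ ((Finset.filter (fun l : Fin n => (l : ℕ) < q) univ).image (Tuple.sort x)).card :=
        Finset.card_le_card hsub
    _ ≤ (Finset.filter (fun l : Fin n => (l : ℕ) < q) univ).card := Finset.card_image_le
    _ = q := aux_card_filter_val_lt n q hq.le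

lemma aux_sortedVal_le_card {n : ℕ} (x : Fin n → ℝ) (q : ℕ) (hq : q < n) :
    q + 1 ≤ (Finset.filter (fun j => x j ≤ sortedVal x q) univ).card := by
  have ht : sortedVal x q = x (Tuple.sort x ⟨q, hq⟩) := by rw [sortedVal, dif_pos hq]
  have hsub : ((Finset.filter (fun l : Fin n => (l : ℕ) < q + 1) univ).image (Tuple.sort x)) ⊆
      (Finset.filter (fun j => x j ≤ sortedVal x q) univ) := by
    intro j hj
    rw [Finset.mem_image] at hj
    obtain ⟨l, hl, rfl⟩ := hj
    rw [Finset.mem_filter] at hl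
    rw [Finset.mem_filter]
    refine ⟨Finset.mem_univ _, ?_⟩
    have hle : l ≤ (⟨q, hq⟩ : Fin n) := by
      rw [Fin.le_def]
      show (l : ℕ) ≤ q
      omega
    have := Tuple.monotone_sort x hle
    simp only [Function.comp_apply] at this
    rw [ht]
    exact this
  calc q + 1 = (Finset.filter (fun l : Fin n => (l : ℕ) < q + 1) univ).card :=
        (aux_card_filter_val_lt n (q+1) hq).symm
    _ = ((Finset.filter (fun l : Fin n => (l : ℕ) < q + 1) univ).image (Tuple.sort x)).card :=
        (Finset.card_image_of_injective _ (Tuple.sort x).injective).symm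
    _ ≤ _ := Finset.card_le_card hsub

lemma aux_percLoc_between {n : ℕ} (hn : 0 < n) (x : Fin n → ℝ) (i : Fin n) (x' : ℝ)
    {v : ℝ} (hv : v ∈ Set.Icc (0:ℝ) 1) :
    (x i ≤ percLoc x v ∧ percLoc x v ≤ percLoc (Function.update x i x') v) ∨
    (percLoc (Function.update x i x') v ≤ percLoc x v ∧ percLoc x v ≤ x i) := by
  have hq : (⌊((n:ℝ)-1)*v⌋).toNat < n := aux_floor_toNat_lt hn hv
  set q := (⌊((n:ℝ)-1)*v⌋).toNat with hqdef
  have hy : percLoc x v = sortedVal x q := rfl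
  have hy' : percLoc (Function.update x i x') v = sortedVal (Function.update x i x') q := rfl
  rw [hy, hy']
  have h1 := aux_sortedVal_le_card (Function.update x i x') q hq
  have h2 := aux_sortedVal_lt_card x q hq
  have h3 := aux_sortedVal_le_card x q hq
  have h4 := aux_sortedVal_lt_card (Function.update x i x') q hq
  set y := sortedVal x q
  set y' := sortedVal (Function.update x i x') q
  rcases lt_trichotomy (x i) y with hxy | hxy | hxy
  · left
    refine ⟨hxy.le, ?_⟩
    by_contra hcon
    push_neg at hcon
    have hsub : (Finset.filter (fun j => Function.update x i x' j ≤ y') univ) ⊆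
        (Finset.filter (fun j => x j < y) univ) := by
      intro j hj
      simp only [Finset.mem_filter, Finset.mem_univ, true_and] at hj ⊢
      by_cases hji : j = i
      · subst hji; exact hxy
      · rw [Function.update_of_ne hji] at hj; exact lt_of_le_of_lt hj hcon
    have := Finset.card_le_card hsub
    omega
  · rcases le_total y y' with h | h
    · exact Or.inl ⟨hxy.le, h⟩
    · exact Or.inr ⟨h, hxy.ge⟩
  · right
    refine ⟨?_, hxy.le⟩
    by_contra hcon
    push_neg at hcon
    have hsub : (Finset.filter (fun j => x j ≤ y) univ) ⊆
        (Finset.filter (fun j => Function.update x i x' j < y') univ) := by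
      intro j hj
      simp only [Finset.mem_filter, Finset.mem_univ, true_and] at hj ⊢
      by_cases hji : j = i
      · subst hji; exact absurd hj (not_le.mpr hxy)
      · rw [Function.update_of_ne hji]; exact lt_of_le_of_lt hj hcon
    have := Finset.card_le_card hsub
    omega

lemma aux_prec_mono {a y y' p : ℝ}
    (h : (a ≤ y ∧ y ≤ y') ∨ (y' ≤ y ∧ y ≤ a)) :
    (|p - y| < |a - y| → |p - y'| < |a - y'|) ∧
    (|p - y| = |a - y| → |p - y'| ≤ |a - y'|) ∧ |a - y| ≤ |a - y'| := by
  rcases h with ⟨h1, h2⟩ | ⟨h1, h2⟩ <;>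
  refine ⟨fun hlt => ?_, fun heq => ?_, ?_⟩ <;>
  rcases abs_cases (p - y) with ⟨e1, f1⟩ | ⟨e1, f1⟩ <;>
  rcases abs_cases (p - y') with ⟨e2, f2⟩ | ⟨e2, f2⟩ <;>
  rcases abs_cases (a - y) with ⟨e3, f3⟩ | ⟨e3, f3⟩ <;>
  rcases abs_cases (a - y') with ⟨e4, f4⟩ | ⟨e4, f4⟩ <;>
  linarith

lemma aux_percLoc_mem {n : ℕ} (hn : 0 < n) (x : Fin n → ℝ) (hx : InUnit x)
    {v : ℝ} (hv : v ∈ Set.Icc (0:ℝ) 1) : percLoc x v ∈ Set.Icc (0:ℝ) 1 := by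
  have hq : (⌊((n:ℝ)-1)*v⌋).toNat < n := aux_floor_toNat_lt hn hv
  rw [percLoc, sortedVal, dif_pos hq]
  exact hx _

end AuxLemmas

/-- Every percentile mechanism `PM_v` is absolutely truthful. -/
theorem percentile_mechanism_absolutely_truthful (n m : ℕ) (hn : 0 < n) (hm : 0 < m)
    (k : Fin m → ℕ) (hk : ∀ j, 0 < k j)
    (v : Fin m → ℝ) (hv : ∀ j, v j ∈ Set.Icc (0 : ℝ) 1) :
    AbsolutelyTruthful (n := n) k (PM v) := by
  intro x hx i x' hx' s
  have hne : Nonempty (Fin m) := ⟨⟨0, hm⟩⟩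
  apply ciSup_mono ((Set.finite_range _).bddAbove)
  intro si
  have hbet := aux_percLoc_between hn x i x' (hv si)
  have harith := fun p : ℝ => aux_prec_mono (a := x i) (p := p) hbet
  have hy01 := aux_percLoc_mem hn x hx (hv si)
  simp only [utility, PM, Function.update_self]
  set y : ℝ := percLoc x (v si)
  set y' : ℝ := percLoc (Function.update x i x') (v si)
  by_cases hserved :
      {i' | Function.update s i si i' = si ∧ Prec x y' i' i}.ncard < k si
  · rw [if_pos hserved]
    have hsub : {i' | Function.update s i si i' = si ∧ Prec x y i' i} ⊆
        {i' | Function.update s i si i' = si ∧ Prec x y' i' i} := by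
      rintro p ⟨hp1, hp2⟩
      refine ⟨hp1, ?_⟩
      rcases hp2 with h | ⟨heq, hlt⟩
      · exact Or.inl ((harith (x p)).1 h)
      · rcases lt_or_eq_of_le ((harith (x p)).2.1 heq) with h | h
        · exact Or.inl h
        · exact Or.inr ⟨h, hlt⟩
    have hcount : {i' | Function.update s i si i' = si ∧ Prec x y i' i}.ncard < k si :=
      lt_of_le_of_lt (Set.ncard_le_ncard hsub (Set.toFinite _)) hserved
    rw [if_pos hcount]
    have := (harith (x i)).2.2
    linarith
  · rw [if_neg hserved]
    split
    · have hxi := hx i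
      have h1 : |x i - y| ≤ 1 := by
        rw [abs_le]
        constructor
        · linarith [hxi.1, hy01.2]
        · linarith [hxi.2, hy01.1]
      linarith
    · exact le_refl 0
end

section
/- Let m = 2 and k_1 ≥ k_2 with k_1 + k_2 < n. Every Side-By-Side percentile mechanism — i.e., every mechanism that sorts the reports non-decreasingly and places the two facilities at two consecutive order statistics y_1 = x_i and y_2 = x_{i+1} — is Equilibrium Stable: for every input x, all pure Nash Equilibria of the induced FCFS game yield the same Social Welfare. -/
open scoped Classical

/-!
Every Nash equilibrium of the FCFS game maximises social welfare over all strategy profiles, so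
all equilibria have the same welfare. Maximality is certified by competitive (Walrasian) prices on
the facilities, i.e. an optimal dual solution of the capacitated assignment LP, after which the
first welfare theorem applies. Since no agent lies strictly between the two facilities, each
agent's payoffs at them differ by exactly their distance `δ`. The prices are the reservation levels
set by the unserved agents, except that a facility envied by an agent served at the other one is
full and its price is raised to the other price plus `δ`.
-/

theorem abs_sub_eq_abs_sub_add_abs_sub_of_notMem_uIoo {t u v : ℝ} (ht : t ∉ Set.uIoo u v)
    (h : |t - u| ≤ |t - v|) : |t - v| = |t - u| + |u - v| := by
  rw [← Set.Ioo_min_max, Set.mem_Ioo, not_and_or, not_lt, not_lt, le_min_iff, max_le_iff] at ht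
  rcases ht with ⟨htu, htv⟩ | ⟨hut, hvt⟩
  · rw [abs_of_nonpos (by linarith : t - u ≤ 0), abs_of_nonpos (by linarith : t - v ≤ 0)] at h ⊢
    rw [abs_of_nonpos (by linarith : u - v ≤ 0)]
    ring
  · rw [abs_of_nonneg (by linarith : 0 ≤ t - u), abs_of_nonneg (by linarith : 0 ≤ t - v)] at h ⊢
    rw [abs_of_nonneg (by linarith : 0 ≤ u - v)]
    ring

open Finset

theorem Finset.card_filter_card_lt_eq_min {ι β : Type*} [LinearOrder β] {f : ι → β}
    (C : Finset ι) (hf : Set.InjOn f C) (k : ℕ) :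
    #{a ∈ C | #{b ∈ C | f b < f a} < k} = min k #C := by
  induction C using Finset.induction_on_max_value f with
  | empty => simp
  | insert a s has hmax ih =>
    have hlt : ∀ b ∈ s, f b < f a := fun b hb =>
      (hmax b hb).lt_of_ne fun h => has (hf.eq_iff (mem_insert_of_mem hb) (mem_insert_self a s)
        |>.1 h ▸ hb)
    have hbelow_a : #{b ∈ insert a s | f b < f a} = #s := by
      rw [filter_insert, if_neg (lt_irrefl _), filter_true_of_mem hlt]
    have hbelow : ∀ b ∈ s, {c ∈ insert a s | f c < f b} = {c ∈ s | f c < f b} := fun b hb => by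
      rw [filter_insert, if_neg (hlt b hb).not_gt]
    have ih := ih (hf.mono (subset_insert a s))
    rw [filter_insert, hbelow_a, filter_congr fun b hb => by rw [hbelow b hb],
      card_insert_of_notMem has]
    split_ifs with h
    · rw [card_insert_of_notMem fun hm => has (mem_filter.1 hm).1]
      convert congrArg (· + 1) ih using 1
      omega
    · convert ih using 1
      omega

namespace FCFS

section Game

variable {n m : ℕ} (x : Fin n → ℝ) (y : Fin m → ℝ) (k : Fin m → ℕ) (s : Fin n → Fin m)

noncomputable def payoff (a : Fin n) (j : Fin m) : ℝ := 1 - |x a - y j|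

noncomputable def numAhead (j : Fin m) (a : Fin n) : ℕ := #{b | s b = j ∧ Prec x (y j) b a}

noncomputable def Served (a : Fin n) : Prop := numAhead x y s (s a) a < k (s a)

noncomputable def servedAt (j : Fin m) : Finset (Fin n) := {a | s a = j ∧ Served x y k s a}

variable {x y k s}

theorem prec_iff_toLex_lt {Y : ℝ} {a b : Fin n} :
    Prec x Y a b ↔ toLex (|x a - Y|, a) < toLex (|x b - Y|, b) := by
  rw [Prod.Lex.lt_iff]
  rfl

theorem not_prec_self (Y : ℝ) (a : Fin n) : ¬ Prec x Y a a := by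
  simp [prec_iff_toLex_lt]

theorem payoff_nonneg (hx : InUnit x) (hy : InUnit y) (a : Fin n) (j : Fin m) :
    0 ≤ payoff x y a j := by
  have := abs_sub_le_of_nonneg_of_le (hx a).1 (hx a).2 (hy j).1 (hy j).2
  simp only [payoff]
  linarith

theorem payoff_le_payoff_add (x : Fin n → ℝ) (y : Fin m → ℝ) (a : Fin n) (j j' : Fin m) :
    payoff x y a j ≤ payoff x y a j' + |y j - y j'| := by
  simp only [payoff]
  linarith [abs_sub_le (x a) (y j) (y j')]

theorem payoff_eq_add_of_le {a : Fin n} {j j' : Fin m} (hgap : x a ∉ Set.uIoo (y j) (y j'))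
    (h : payoff x y a j' ≤ payoff x y a j) : payoff x y a j = payoff x y a j' + |y j - y j'| := by
  simp only [payoff] at h ⊢
  linarith [abs_sub_eq_abs_sub_add_abs_sub_of_notMem_uIoo hgap (by linarith)]

theorem utility_eq_ite (a : Fin n) :
    utility x y k s a = if Served x y k s a then payoff x y a (s a) else 0 := by
  simp only [utility, Served, numAhead, payoff, Set.ncard_eq_toFinset_card', Set.toFinset_ofPred]
  congr 1

theorem utility_update_self (a : Fin n) (j : Fin m) :
    utility x y k (Function.update s a j) a
      = if numAhead x y s j a < k j then payoff x y a j else 0 := by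
  have hahead : numAhead x y (Function.update s a j) j a = numAhead x y s j a := by
    refine congrArg card (filter_congr fun b _ => ?_)
    rcases eq_or_ne b a with rfl | hb
    · simp [not_prec_self]
    · rw [Function.update_of_ne hb]
  rw [utility_eq_ite, Served, Function.update_self, hahead]
  congr 1

theorem mem_servedAt {a : Fin n} {j : Fin m} :
    a ∈ servedAt x y k s j ↔ s a = j ∧ Served x y k s a := by
  simp [servedAt]

theorem utility_of_mem_servedAt {a : Fin n} {j : Fin m} (ha : a ∈ servedAt x y k s j) :
    utility x y k s a = payoff x y a j := by
  obtain ⟨rfl, hserved⟩ := mem_servedAt.1 ha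
  rw [utility_eq_ite, if_pos hserved]

theorem utility_of_not_served {a : Fin n} (ha : ¬ Served x y k s a) : utility x y k s a = 0 := by
  rw [utility_eq_ite, if_neg ha]

theorem card_servedAt (j : Fin m) : #(servedAt x y k s j) = min (k j) #{a | s a = j} := by
  have hinj : Set.InjOn (fun a => toLex (|x a - y j|, a)) ({a | s a = j} : Finset (Fin n)) :=
    fun a _ b _ h => (Prod.ext_iff.1 (toLex.injective h)).2
  rw [← card_filter_card_lt_eq_min _ hinj]
  refine congrArg card (Finset.ext fun a => ?_)
  simp only [servedAt, Served, numAhead, mem_filter, mem_univ, true_and, filter_filter,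
    prec_iff_toLex_lt]
  constructor <;> rintro ⟨rfl, h⟩ <;> exact ⟨rfl, h⟩

theorem card_servedAt_le (j : Fin m) : #(servedAt x y k s j) ≤ k j :=
  card_servedAt j ▸ min_le_left _ _

theorem payoff_le_of_le_numAhead {a : Fin n} {j : Fin m} (h : k j ≤ numAhead x y s j a) :
    ∀ b ∈ servedAt x y k s j, payoff x y a j ≤ payoff x y b j := by
  intro b hb
  obtain ⟨rfl, hserved⟩ := mem_servedAt.1 hb
  by_contra hlt
  have hcloser : |x a - y (s b)| < |x b - y (s b)| := by
    simp only [payoff] at hlt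
    linarith
  have hsub : ({c | s c = s b ∧ Prec x (y (s b)) c a} : Finset (Fin n)) ⊆
      ({c | s c = s b ∧ Prec x (y (s b)) c b} : Finset (Fin n)) := by
    intro c
    simp only [mem_filter, mem_univ, true_and]
    rintro ⟨hc, hprec | hprec⟩
    · exact ⟨hc, Or.inl (hprec.trans hcloser)⟩
    · exact ⟨hc, Or.inl (hprec.1 ▸ hcloser)⟩
  exact absurd (h.trans (card_le_card hsub)) (not_le.2 hserved)

theorem card_servedAt_le_of_utility_lt (hs : isNE x y k s) {a : Fin n} {j : Fin m}
    (h : utility x y k s a < payoff x y a j) : k j ≤ #(servedAt x y k s j) := by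
  by_contra! hlt
  have hahead : numAhead x y s j a < k j := by
    rw [card_servedAt, min_lt_iff, lt_self_iff_false, false_or] at hlt
    exact (card_le_card (monotone_filter_right _ fun _ _ hb => hb.1)).trans_lt hlt
  have := hs a j
  rw [utility_update_self, if_pos hahead] at this
  linarith

theorem payoff_le_of_utility_lt (hs : isNE x y k s) {a : Fin n} {j : Fin m}
    (h : utility x y k s a < payoff x y a j) :
    ∀ b ∈ servedAt x y k s j, payoff x y a j ≤ payoff x y b j := by
  refine payoff_le_of_le_numAhead (not_lt.1 fun hahead => ?_)
  have := hs a j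
  rw [utility_update_self, if_pos hahead] at this
  linarith

end Game

section Prices

variable {n m : ℕ} {x : Fin n → ℝ} {y : Fin m → ℝ} {k : Fin m → ℕ} {s : Fin n → Fin m}

structure IsWalrasian (x : Fin n → ℝ) (y : Fin m → ℝ) (k : Fin m → ℕ) (s : Fin n → Fin m)
    (c : Fin m → ℝ) : Prop where
  price_nonneg : ∀ j, 0 ≤ c j
  price_eq_zero : ∀ j, #(servedAt x y k s j) < k j → c j = 0
  payoff_le_price : ∀ u, ¬ Served x y k s u → ∀ j, payoff x y u j ≤ c j
  price_le_payoff : ∀ j, ∀ a ∈ servedAt x y k s j, c j ≤ payoff x y a j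
  payoff_sub_price_le :
    ∀ j, ∀ a ∈ servedAt x y k s j, ∀ i, payoff x y a i - c i ≤ payoff x y a j - c j

variable (x y k s) in
noncomputable def payment (c : Fin m → ℝ) (a : Fin n) : ℝ :=
  if Served x y k s a then c (s a) else 0

variable (x y k s) in
noncomputable def surplus (c : Fin m → ℝ) (a : Fin n) : ℝ :=
  if Served x y k s a then payoff x y a (s a) - c (s a) else 0

theorem utility_eq_surplus_add_payment (c : Fin m → ℝ) (a : Fin n) :
    utility x y k s a = surplus x y k s c a + payment x y k s c a := by
  simp only [utility_eq_ite, surplus, payment]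
  split_ifs <;> ring

theorem sum_payment (c : Fin m → ℝ) :
    ∑ a, payment x y k s c a = ∑ j, #(servedAt x y k s j) * c j := by
  rw [← sum_fiberwise univ s]
  refine sum_congr rfl fun j _ => ?_
  calc ∑ a ∈ {a | s a = j}, payment x y k s c a
      = ∑ a ∈ {a | s a = j}, if Served x y k s a then c j else 0 :=
        sum_congr rfl fun a ha => by rw [payment, (mem_filter.1 ha).2]
    _ = #(servedAt x y k s j) * c j := by
        rw [sum_ite, sum_const_zero, add_zero, sum_const, filter_filter, nsmul_eq_mul]
        rfl

namespace IsWalrasian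

variable {c : Fin m → ℝ}

theorem surplus_nonneg (hc : IsWalrasian x y k s c) (a : Fin n) : 0 ≤ surplus x y k s c a := by
  by_cases ha : Served x y k s a
  · simpa [surplus, ha] using hc.price_le_payoff (s a) a (mem_servedAt.2 ⟨rfl, ha⟩)
  · simp [surplus, ha]

theorem payoff_sub_price_le_surplus (hc : IsWalrasian x y k s c) (a : Fin n) (j : Fin m) :
    payoff x y a j - c j ≤ surplus x y k s c a := by
  by_cases ha : Served x y k s a
  · simpa [surplus, ha] using hc.payoff_sub_price_le (s a) a (mem_servedAt.2 ⟨rfl, ha⟩) j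
  · simpa [surplus, ha] using hc.payoff_le_price a ha j

theorem utility_le_surplus_add_payment (hc : IsWalrasian x y k s c) (s' : Fin n → Fin m)
    (a : Fin n) :
    utility x y k s' a ≤ surplus x y k s c a + payment x y k s' c a := by
  rw [utility_eq_ite, payment]
  split_ifs
  · linarith [hc.payoff_sub_price_le_surplus a (s' a)]
  · linarith [hc.surplus_nonneg a]

theorem sum_payment_le (hc : IsWalrasian x y k s c) (s' : Fin n → Fin m) :
    ∑ a, payment x y k s' c a ≤ ∑ a, payment x y k s c a := by
  rw [sum_payment, sum_payment]
  refine sum_le_sum fun j _ => ?_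
  rcases (card_servedAt_le (x := x) (y := y) (s := s) j).lt_or_eq with hlt | heq
  · simp [hc.price_eq_zero j hlt]
  · rw [heq]
    exact mul_le_mul_of_nonneg_right (mod_cast card_servedAt_le j) (hc.price_nonneg j)

theorem sw_le (hc : IsWalrasian x y k s c) (s' : Fin n → Fin m) : SW x y k s' ≤ SW x y k s :=
  calc SW x y k s' ≤ ∑ a, (surplus x y k s c a + payment x y k s' c a) :=
        sum_le_sum fun a _ => hc.utility_le_surplus_add_payment s' a
    _ ≤ ∑ a, (surplus x y k s c a + payment x y k s c a) := by
        rw [sum_add_distrib, sum_add_distrib]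
        linarith [hc.sum_payment_le s']
    _ = SW x y k s := sum_congr rfl fun a _ => (utility_eq_surplus_add_payment c a).symm

end IsWalrasian

end Prices

section Reserve

variable {n m : ℕ} {x : Fin n → ℝ} {y : Fin m → ℝ} {k : Fin m → ℕ} {s : Fin n → Fin m}

variable (x y k s) in
/-- `max 0` of the unserved agents' payoffs at `j`, computed in `ℝ≥0` so that it is also defined
when everybody is served. -/
noncomputable def reserve (j : Fin m) : ℝ :=
  (({u | ¬ Served x y k s u} : Finset (Fin n)).sup fun u => (payoff x y u j).toNNReal : NNReal)

theorem reserve_nonneg (j : Fin m) : 0 ≤ reserve x y k s j := NNReal.coe_nonneg _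

theorem reserve_le_iff {j : Fin m} {M : ℝ} (hM : 0 ≤ M) :
    reserve x y k s j ≤ M ↔ ∀ u, ¬ Served x y k s u → payoff x y u j ≤ M := by
  rw [reserve, ← Real.coe_toNNReal M hM, NNReal.coe_le_coe, Finset.sup_le_iff]
  simp only [mem_filter, mem_univ, true_and, Real.toNNReal_le_toNNReal_iff hM,
    Real.coe_toNNReal _ hM]

theorem payoff_le_reserve {u : Fin n} (hu : ¬ Served x y k s u) (j : Fin m) :
    payoff x y u j ≤ reserve x y k s j :=
  (Real.le_coe_toNNReal _).trans <| NNReal.coe_le_coe.2 <|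
    le_sup (f := fun u => (payoff x y u j).toNNReal) (by simpa using hu)

theorem reserve_le_reserve_add {j j' : Fin m} {d : ℝ} (hd : 0 ≤ d)
    (h : ∀ u, payoff x y u j ≤ payoff x y u j' + d) :
    reserve x y k s j ≤ reserve x y k s j' + d :=
  (reserve_le_iff (by linarith [reserve_nonneg (x := x) (y := y) (k := k) (s := s) j'])).2
    fun u hu => (h u).trans (by linarith [payoff_le_reserve hu j'])

theorem reserve_le_payoff (hs : isNE x y k s) {a : Fin n} {j : Fin m}
    (ha : a ∈ servedAt x y k s j) (hpay : 0 ≤ payoff x y a j) :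
    reserve x y k s j ≤ payoff x y a j := by
  refine (reserve_le_iff hpay).2 fun u hu => ?_
  by_contra! hlt
  have henvy : utility x y k s u < payoff x y u j := by
    rw [utility_of_not_served hu]; linarith
  linarith [payoff_le_of_utility_lt hs henvy a ha]

theorem reserve_eq_zero (hs : isNE x y k s) {j : Fin m} (hj : #(servedAt x y k s j) < k j) :
    reserve x y k s j = 0 := by
  refine le_antisymm ((reserve_le_iff le_rfl).2 fun u hu => ?_) (reserve_nonneg j)
  by_contra! hpos
  rw [← utility_of_not_served hu] at hpos
  exact absurd (card_servedAt_le_of_utility_lt hs hpos) (not_le.2 hj)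

theorem isWalrasian_reserve (hs : isNE x y k s) (hpay : ∀ a j, 0 ≤ payoff x y a j)
    (hgap : ∀ a j j', x a ∉ Set.uIoo (y j) (y j'))
    (h : ∀ j, ∀ a ∈ servedAt x y k s j, ∀ i, payoff x y a i ≤ payoff x y a j) :
    IsWalrasian x y k s (reserve x y k s) where
  price_nonneg := reserve_nonneg
  price_eq_zero _ := reserve_eq_zero hs
  payoff_le_price _ hu := payoff_le_reserve hu
  price_le_payoff _ _ ha := reserve_le_payoff hs ha (hpay _ _)
  payoff_sub_price_le j a ha i := by
    have hpayoff := payoff_eq_add_of_le (hgap a j i) (h j a ha i)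
    have hreserve : reserve x y k s j ≤ reserve x y k s i + |y j - y i| :=
      reserve_le_reserve_add (abs_nonneg _) fun u => payoff_le_payoff_add x y u j i
    linarith

end Reserve

section TwoFacilities

variable {n : ℕ} {x : Fin n → ℝ} {y : Fin 2 → ℝ} {k : Fin 2 → ℕ} {s : Fin n → Fin 2}

theorem isWalrasian_of_envy (hs : isNE x y k s) (hpay : ∀ a j, 0 ≤ payoff x y a j)
    (hgap : ∀ a j j', x a ∉ Set.uIoo (y j) (y j')) {j j' : Fin 2} {β : Fin n}
    (hβ : β ∈ servedAt x y k s j') (hβj : payoff x y β j' < payoff x y β j) :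
    IsWalrasian x y k s
      (fun i => if i = j then reserve x y k s j' + |y j - y j'| else reserve x y k s j') := by
  set d := |y j - y j'|
  have hjj : j' ≠ j := by rintro rfl; exact lt_irrefl _ hβj
  have hcases : ∀ i, i = j ∨ i = j' := by omega
  have henvy : utility x y k s β < payoff x y β j := by rwa [utility_of_mem_servedAt hβ]
  have hβd := payoff_eq_add_of_le (hgap β j j') hβj.le
  have hblock := payoff_le_of_utility_lt hs henvy
  have hβres := reserve_le_payoff hs hβ (hpay β j')
  -- An agent served at `j` but preferring `j'` would be blocked at `j'` by `β` while blocking `β`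
  -- at `j`; the payoff gap `d` makes these incompatible.
  have hleft : ∀ a ∈ servedAt x y k s j, payoff x y a j = payoff x y a j' + d := by
    intro a ha
    refine payoff_eq_add_of_le (hgap a j j') (not_lt.1 fun hlt => ?_)
    have := payoff_le_of_utility_lt hs (utility_of_mem_servedAt ha ▸ hlt) β hβ
    linarith [hblock a ha, abs_nonneg (y j - y j')]
  have hres := reserve_nonneg (x := x) (y := y) (k := k) (s := s) j'
  have hd : 0 ≤ d := abs_nonneg _
  constructor
  · intro i
    rcases hcases i with rfl | rfl <;> simp only [if_pos, if_neg hjj] <;> linarith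
  · intro i hi
    rcases hcases i with rfl | rfl
    · exact absurd (card_servedAt_le_of_utility_lt hs henvy) (not_le.2 hi)
    · simpa [hjj] using reserve_eq_zero hs hi
  · intro u hu i
    have := payoff_le_reserve hu j'
    rcases hcases i with rfl | rfl <;> simp only [if_pos, if_neg hjj]
    · linarith [payoff_le_payoff_add x y u i j']
    · exact this
  · intro i a ha
    rcases hcases i with rfl | rfl <;> simp only [if_pos, if_neg hjj]
    · linarith [hblock a ha]
    · exact reserve_le_payoff hs ha (hpay a _)
  · intro i a ha i'
    rcases hcases i with rfl | rfl <;> rcases hcases i' with rfl | rfl <;>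
      simp only [if_pos, if_neg hjj, le_refl]
    · linarith [hleft a ha]
    · linarith [payoff_le_payoff_add x y a i' i]

theorem exists_isWalrasian (hs : isNE x y k s) (hpay : ∀ a j, 0 ≤ payoff x y a j)
    (hgap : ∀ a j j', x a ∉ Set.uIoo (y j) (y j')) : ∃ c, IsWalrasian x y k s c := by
  by_cases henvy : ∃ j', ∃ β ∈ servedAt x y k s j', ∃ j, payoff x y β j' < payoff x y β j
  · obtain ⟨j', β, hβ, j, hβj⟩ := henvy
    exact ⟨_, isWalrasian_of_envy hs hpay hgap hβ hβj⟩
  · push Not at henvy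
    exact ⟨_, isWalrasian_reserve hs hpay hgap henvy⟩

theorem sw_le_of_isNE (hs : isNE x y k s) (hpay : ∀ a j, 0 ≤ payoff x y a j)
    (hgap : ∀ a j j', x a ∉ Set.uIoo (y j) (y j')) (s' : Fin n → Fin 2) :
    SW x y k s' ≤ SW x y k s :=
  (exists_isWalrasian hs hpay hgap).choose_spec.sw_le s'

end TwoFacilities

end FCFS

section SortedVal

variable {n : ℕ} {x : Fin n → ℝ}

theorem sortedVal_of_lt {i : ℕ} (hi : i < n) : sortedVal x i = x (Tuple.sort x ⟨i, hi⟩) :=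
  dif_pos hi

theorem sortedVal_mem_Icc (hx : InUnit x) (i : ℕ) : sortedVal x i ∈ Set.Icc (0 : ℝ) 1 := by
  unfold sortedVal
  split_ifs
  exacts [hx _, ⟨le_rfl, zero_le_one⟩]

theorem sortedVal_le_sortedVal {i j : ℕ} (hij : i ≤ j) (hj : j < n) :
    sortedVal x i ≤ sortedVal x j := by
  rw [sortedVal_of_lt (hij.trans_lt hj), sortedVal_of_lt hj]
  exact Tuple.monotone_sort x (Fin.mk_le_mk.2 hij)

theorem notMem_Ioo_sortedVal_sub_one {i : ℕ} (hi : i < n) (a : Fin n) :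
    x a ∉ Set.Ioo (sortedVal x (i - 1)) (sortedVal x i) := by
  rintro ⟨hlo, hhi⟩
  obtain ⟨r, rfl⟩ := (Tuple.sort x).surjective a
  rcases le_or_gt (r : ℕ) (i - 1) with hr | hr
  · have := sortedVal_le_sortedVal (x := x) hr (by omega)
    rw [sortedVal_of_lt r.2] at this
    exact hlo.not_ge this
  · have := sortedVal_le_sortedVal (x := x) (by omega : i ≤ r) r.2
    rw [sortedVal_of_lt r.2] at this
    exact hhi.not_ge this

end SortedVal

open FCFS in
theorem SBS_is_ES_general (n k₁ k₂ : ℕ) (i : ℕ) (hi2 : i < n) :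
    EquilibriumStable (n := n) ![k₁, k₂]
      (fun x => ![sortedVal x (i - 1), sortedVal x i]) := by
  intro x hx s s' hs hs'
  set y : Fin 2 → ℝ := ![sortedVal x (i - 1), sortedVal x i]
  have hy : InUnit y := fun j => by fin_cases j <;> exact sortedVal_mem_Icc hx _
  have hpay := payoff_nonneg hx hy
  have hgap : ∀ a j j', x a ∉ Set.uIoo (y j) (y j') := by
    intro a j j'
    have h01 : x a ∉ Set.uIoo (sortedVal x (i - 1)) (sortedVal x i) := by
      rw [Set.uIoo_of_le (sortedVal_le_sortedVal (Nat.sub_le i 1) hi2)]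
      exact notMem_Ioo_sortedVal_sub_one hi2 a
    fin_cases j <;> fin_cases j' <;>
      simp [y, h01, Set.uIoo_comm (sortedVal x i)]
  exact le_antisymm (sw_le_of_isNE hs' hpay hgap s) (sw_le_of_isNE hs hpay hgap s')

/-- Every Side-By-Side mechanism — placing the facility with capacity
`k₁` at the `i`-th sorted report and the facility with capacity `k₂` at the `(i+1)`-th
sorted report (1-based, `i ∈ [n-1]`) — is Equilibrium Stable. -/
theorem SBS_is_ES (n k₁ k₂ : ℕ) (hk : k₂ ≤ k₁) (hk₂ : 0 < k₂) (hn : k₁ + k₂ < n)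
    (i : ℕ) (hi1 : 1 ≤ i) (hi2 : i < n) :
    EquilibriumStable (n := n) ![k₁, k₂]
      (fun x => ![sortedVal x (i - 1), sortedVal x i]) :=
  SBS_is_ES_general n k₁ k₂ i hi2
end

section
/- Consider two facilities with capacities k_1, k_2 (k_1 + k_2 < n) to be located among n agents in [0,1]^2 by a 2-dimensional percentile mechanism. If the 2-dimensional percentile mechanism is Equilibrium Stable, then each of its coordinate percentile mechanisms is Equilibrium Stable for the corresponding one-dimensional problem: if some coordinate percentile mechanism admits a one-dimensional instance whose pure Nash Equilibria yield different Social Welfare values, then embedding that instance on the corresponding axis (setting the other coordinate of every agent to 0) yields a 2-dimensional instance on which the percentile mechanism's output induces pure Nash Equilibria with different Social Welfare values. -/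
open scoped Classical

noncomputable section

/-- Euclidean distance in the plane (points given as `Fin 2 → ℝ`). -/
def dist2 (a b : Fin 2 → ℝ) : ℝ := Real.sqrt (∑ l, (a l - b l) ^ 2)

/-- Agent `i'` precedes agent `i` at a facility located at `y` (2-dimensional). -/
def Prec2 {n : ℕ} (x : Fin n → Fin 2 → ℝ) (y : Fin 2 → ℝ) (i' i : Fin n) : Prop :=
  dist2 (x i') y < dist2 (x i) y ∨ (dist2 (x i') y = dist2 (x i) y ∧ i' < i)

/-- Utility of agent `i` in the 2-dimensional FCFS game: a served agent gets
`√2 - d(xᵢ, y_{sᵢ})`, an unserved agent gets `0`. -/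
def utility2 {n m : ℕ} (x : Fin n → Fin 2 → ℝ) (y : Fin m → Fin 2 → ℝ)
    (k : Fin m → ℕ) (s : Fin n → Fin m) (i : Fin n) : ℝ :=
  if {i' | s i' = s i ∧ Prec2 x (y (s i)) i' i}.ncard < k (s i)
  then Real.sqrt 2 - dist2 (x i) (y (s i)) else 0

/-- Pure Nash equilibrium of the 2-dimensional FCFS game. -/
def isNE2 {n m : ℕ} (x : Fin n → Fin 2 → ℝ) (y : Fin m → Fin 2 → ℝ)
    (k : Fin m → ℕ) (s : Fin n → Fin m) : Prop :=
  ∀ (i : Fin n) (j : Fin m),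
    utility2 x y k (Function.update s i j) i ≤ utility2 x y k s i

/-- Social welfare in the 2-dimensional FCFS game. -/
def SW2 {n m : ℕ} (x : Fin n → Fin 2 → ℝ) (y : Fin m → Fin 2 → ℝ)
    (k : Fin m → ℕ) (s : Fin n → Fin m) : ℝ :=
  ∑ i, utility2 x y k s i

def InUnit2 {N : ℕ} (x : Fin N → Fin 2 → ℝ) : Prop :=
  ∀ i l, x i l ∈ Set.Icc (0 : ℝ) 1

/-- The 2-dimensional percentile mechanism induced by row vectors `V l` (the `l`-th
coordinate percentile mechanism): the `l`-th coordinate of facility `j` is the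
`(⌊V l j (n-1)⌋+1)`-th smallest `l`-th coordinate among the reports. -/
def PM2 {n m : ℕ} (V : Fin 2 → Fin m → ℝ) :
    (Fin n → Fin 2 → ℝ) → Fin m → Fin 2 → ℝ :=
  fun x j l => percLoc (fun i => x i l) (V l j)

/-- Equilibrium Stability for 2-dimensional mechanisms. -/
def EquilibriumStable2 {n m : ℕ} (k : Fin m → ℕ)
    (M : (Fin n → Fin 2 → ℝ) → Fin m → Fin 2 → ℝ) : Prop :=
  ∀ x, InUnit2 x → ∀ s s', isNE2 x (M x) k s → isNE2 x (M x) k s' →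
    SW2 x (M x) k s = SW2 x (M x) k s'

/-- Optimal Social Welfare over facility locations in `([0,1]^2)^m` and Nash equilibria. -/
def SWopt2 {n m : ℕ} (k : Fin m → ℕ) (x : Fin n → Fin 2 → ℝ) : ℝ :=
  sSup {w | ∃ y : Fin m → Fin 2 → ℝ, InUnit2 y ∧ ∃ s, isNE2 x y k s ∧ w = SW2 x y k s}

/-- Social Welfare achieved by a 2-dimensional mechanism. -/
def SWmech2 {n m : ℕ} (k : Fin m → ℕ) (M : (Fin n → Fin 2 → ℝ) → Fin m → Fin 2 → ℝ)
    (x : Fin n → Fin 2 → ℝ) : ℝ :=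
  sSup {w | ∃ s, isNE2 x (M x) k s ∧ w = SW2 x (M x) k s}

/-- Approximation ratio of a 2-dimensional mechanism. -/
def approxRatio2 {n m : ℕ} (k : Fin m → ℕ)
    (M : (Fin n → Fin 2 → ℝ) → Fin m → Fin 2 → ℝ) : ℝ :=
  sSup {r | ∃ x : Fin n → Fin 2 → ℝ, InUnit2 x ∧ r = SWopt2 k x / SWmech2 k M x}

/-- Embedding of a one-dimensional instance on the `l`-th axis. -/
def embedAxis {n : ℕ} (l : Fin 2) (z : Fin n → ℝ) : Fin n → Fin 2 → ℝ :=
  fun i l' => if l' = l then z i else 0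

end

/-! On an axis the planar game is the one-dimensional FCFS game with payoff `√2 - d` in place of
`1 - d`. Since `√2 > 1` and `k₁ + k₂ < n`, every facility is full at an equilibrium of the
`√2`-game, so there the welfare is the `1`-game welfare plus `(√2 - 1)(k₁ + k₂)`. An equilibrium
of the `1`-game need not be one of the `√2`-game, but the only profitable deviations left are
unserved agents moving to a facility at distance exactly `1`, which changes no `1`-game utility.
Performing such moves terminates in an equilibrium of the `√2`-game with the same `1`-game
welfare, so equilibria of different welfare transfer to the plane. -/

open Finset Function

theorem Finset.card_filter_card_filter_lt_lt {ι α : Type*} [DecidableEq ι] [LinearOrder α]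
    {f : ι → α} (hf : Injective f) (s : Finset ι) (K : ℕ) :
    #{a ∈ s | #{b ∈ s | f b < f a} < K} = min K #s := by
  induction s using Finset.induction_on_max_value f with
  | empty => simp
  | insert a s ha hmax ih =>
    have hlt : ∀ b ∈ s, f b < f a := fun b hb =>
      (hmax b hb).lt_of_ne (hf.ne (ne_of_mem_of_not_mem hb ha))
    have h_a : {b ∈ insert a s | f b < f a} = s := by
      rw [filter_insert, if_neg (lt_irrefl _), filter_true_of_mem hlt]
    have h_s : ∀ b ∈ s, {c ∈ insert a s | f c < f b} = {c ∈ s | f c < f b} := fun b hb => by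
      rw [filter_insert, if_neg (hlt b hb).not_gt]
    rw [filter_insert, h_a, filter_congr fun b hb => by rw [h_s b hb], card_insert_of_notMem ha]
    split_ifs with h
    · rw [card_insert_of_notMem fun h' => ha (mem_filter.1 h').1, ih]; omega
    · omega

noncomputable section OneDimensional

variable {n m : ℕ}

def precKey (x : Fin n → ℝ) (y : ℝ) (i : Fin n) : ℝ ×ₗ Fin n := toLex (|x i - y|, i)

theorem prec_iff_precKey_lt {x : Fin n → ℝ} {y : ℝ} {i' i : Fin n} :
    Prec x y i' i ↔ precKey x y i' < precKey x y i := by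
  rw [precKey, precKey, Prod.Lex.toLex_lt_toLex]; rfl

theorem precKey_injective (x : Fin n → ℝ) (y : ℝ) : Injective (precKey x y) :=
  fun _ _ h => (Prod.ext_iff.1 (toLex.injective h)).2

theorem Prec.irrefl (x : Fin n → ℝ) (y : ℝ) (i : Fin n) : ¬ Prec x y i i := by
  simp [prec_iff_precKey_lt]

theorem Prec.trans {x : Fin n → ℝ} {y : ℝ} {a b c : Fin n} (hab : Prec x y a b)
    (hbc : Prec x y b c) : Prec x y a c := by
  rw [prec_iff_precKey_lt] at *
  exact hab.trans hbc

theorem Prec.abs_sub_le {x : Fin n → ℝ} {y : ℝ} {a b : Fin n} (h : Prec x y a b) :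
    |x a - y| ≤ |x b - y| := by
  rcases h with h | h
  · exact h.le
  · exact h.1.le

theorem Prec.lt_of_abs_sub_le {x : Fin n → ℝ} {y : ℝ} {a b : Fin n} (h : Prec x y a b)
    (hba : |x b - y| ≤ |x a - y|) : a < b := by
  rcases h with h | h
  · exact absurd h hba.not_gt
  · exact h.2

def preceders (x : Fin n → ℝ) (y : Fin m → ℝ) (s : Fin n → Fin m) (i : Fin n) : Finset (Fin n) :=
  {i' | s i' = s i ∧ Prec x (y (s i)) i' i}

def Served (x : Fin n → ℝ) (y : Fin m → ℝ) (k : Fin m → ℕ) (s : Fin n → Fin m) (i : Fin n) :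
    Prop :=
  {i' | s i' = s i ∧ Prec x (y (s i)) i' i}.ncard < k (s i)

theorem served_iff {x : Fin n → ℝ} {y : Fin m → ℝ} {k : Fin m → ℕ} {s : Fin n → Fin m}
    {i : Fin n} : Served x y k s i ↔ #(preceders x y s i) < k (s i) := by
  rw [Served, preceders, ← Set.ncard_coe_finset, coe_filter]
  simp only [mem_univ, true_and]

def utilityWith (c : ℝ) (x : Fin n → ℝ) (y : Fin m → ℝ) (k : Fin m → ℕ) (s : Fin n → Fin m)
    (i : Fin n) : ℝ :=
  if Served x y k s i then c - |x i - y (s i)| else 0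

def IsNEWith (c : ℝ) (x : Fin n → ℝ) (y : Fin m → ℝ) (k : Fin m → ℕ) (s : Fin n → Fin m) :
    Prop :=
  ∀ i j, utilityWith c x y k (update s i j) i ≤ utilityWith c x y k s i

def SWWith (c : ℝ) (x : Fin n → ℝ) (y : Fin m → ℝ) (k : Fin m → ℕ) (s : Fin n → Fin m) : ℝ :=
  ∑ i, utilityWith c x y k s i

theorem utilityWith_one : utilityWith 1 = @utility n m := by
  ext x y k s i
  unfold utilityWith utility Served
  congr

theorem isNE_iff_isNEWith_one {x : Fin n → ℝ} {y : Fin m → ℝ} {k : Fin m → ℕ}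
    {s : Fin n → Fin m} : isNE x y k s ↔ IsNEWith 1 x y k s := by
  rw [isNE, IsNEWith, utilityWith_one]

theorem SWWith_one (x : Fin n → ℝ) (y : Fin m → ℝ) (k : Fin m → ℕ) (s : Fin n → Fin m) :
    SWWith 1 x y k s = SW x y k s := by
  rw [SWWith, SW, utilityWith_one]

end OneDimensional

section Counting

variable {n m : ℕ} {x : Fin n → ℝ} {y : Fin m → ℝ} {k : Fin m → ℕ} {s : Fin n → Fin m}

theorem card_served_at (j : Fin m) :
    #{w | s w = j ∧ Served x y k s w} = min (k j) #{w | s w = j} := by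
  rw [← card_filter_card_filter_lt_lt (precKey_injective x (y j))]
  congr 1
  ext w
  simp only [mem_filter, mem_univ, true_and, served_iff, preceders, filter_filter,
    ← prec_iff_precKey_lt]
  constructor <;> rintro ⟨rfl, h⟩ <;> exact ⟨rfl, h⟩

theorem card_served : #{w | Served x y k s w} = ∑ j, min (k j) #{w | s w = j} := by
  rw [card_eq_sum_card_fiberwise (f := s) (t := univ) fun _ _ => mem_univ _]
  refine sum_congr rfl fun j _ => ?_
  rw [← card_served_at (x := x) (y := y) (k := k), filter_filter]
  simp only [and_comm]

theorem preceders_update_self_subset (u : Fin n) (j : Fin m) :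
    preceders x y (update s u j) u ⊆ ({w | s w = j} : Finset (Fin n)) := by
  intro w hw
  simp only [preceders, mem_filter, mem_univ, true_and, update_self] at hw ⊢
  have hwu : w ≠ u := by rintro rfl; exact Prec.irrefl _ _ _ hw.2
  rw [← hw.1, update_of_ne hwu]

theorem served_update_self_of_card_lt {j : Fin m} (u : Fin n) (hj : #{w | s w = j} < k j) :
    Served x y k (update s u j) u := by
  rw [served_iff, update_self]
  exact (card_le_card (preceders_update_self_subset u j)).trans_lt hj

/-- Some agent is left out, and it would be served at any facility with a free slot. -/
theorem card_served_of_isNEWith {c : ℝ} (hc : 1 < c) (hd : ∀ w j, |x w - y j| ≤ 1)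
    (hk : ∑ j, k j < n) (hs : IsNEWith c x y k s) : #{w | Served x y k s w} = ∑ j, k j := by
  have hle : #{w | Served x y k s w} ≤ ∑ j, k j :=
    card_served.trans_le (sum_le_sum fun j _ => min_le_left _ _)
  obtain ⟨u, hu⟩ : ∃ u, ¬ Served x y k s u := by
    by_contra! h
    rw [filter_true_of_mem fun u _ => h u, card_univ, Fintype.card_fin] at hle
    omega
  rw [card_served]
  refine sum_congr rfl fun j _ => min_eq_left (not_lt.1 fun hj => ?_)
  have h := hs u j
  rw [utilityWith, if_pos (served_update_self_of_card_lt u hj), update_self, utilityWith,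
    if_neg hu] at h
  linarith [hd u j]

theorem SWWith_eq_add (c c' : ℝ) :
    SWWith c x y k s = SWWith c' x y k s + (c - c') * #{w | Served x y k s w} := by
  have h : ∀ w, utilityWith c x y k s w =
      utilityWith c' x y k s w + (c - c') * if Served x y k s w then 1 else 0 := by
    intro w
    unfold utilityWith
    split_ifs <;> ring
  simp only [SWWith, h, sum_add_distrib, ← mul_sum, sum_boole]

theorem SWWith_of_isNEWith {c : ℝ} (hc : 1 < c) (hd : ∀ w j, |x w - y j| ≤ 1)
    (hk : ∑ j, k j < n) (hs : IsNEWith c x y k s) :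
    SWWith c x y k s = SWWith 1 x y k s + (c - 1) * ∑ j, k j := by
  rw [SWWith_eq_add c 1, card_served_of_isNEWith hc hd hk hs, Nat.cast_sum]

end Counting

section FarDeviation

variable {n m : ℕ} {x : Fin n → ℝ} {y : Fin m → ℝ} {k : Fin m → ℕ}

theorem mem_preceders {s : Fin n → Fin m} {a w : Fin n} :
    a ∈ preceders x y s w ↔ s a = s w ∧ Prec x (y (s w)) a w := by
  simp [preceders]

theorem utilityWith_one_of_far {s : Fin n → Fin m} {w : Fin n} (h : |x w - y (s w)| = 1) :
    utilityWith 1 x y k s w = 0 := by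
  simp [utilityWith, h]

theorem utilityWith_of_not_served {c : ℝ} {s : Fin n → Fin m} {w : Fin n}
    (h : ¬ Served x y k s w) : utilityWith c x y k s w = 0 :=
  if_neg h

theorem erase_preceders_update {q : Fin n → Fin m} {i w : Fin n} (b : Fin m) (hw : w ≠ i) :
    (preceders x y (update q i b) w).erase i = (preceders x y q w).erase i := by
  ext a
  by_cases ha : a = i
  · simp [ha]
  · simp [mem_preceders, update_of_ne ha, update_of_ne hw]

theorem preceders_subset_erase_preceders {q : Fin n → Fin m} {i w : Fin n}
    (h : i ∈ preceders x y q w) : preceders x y q i ⊆ (preceders x y q w).erase i := by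
  intro a ha
  rw [mem_preceders] at h ha
  refine mem_erase.2 ⟨?_, mem_preceders.2 ⟨ha.1.trans h.1, ?_⟩⟩
  · rintro rfl; exact Prec.irrefl _ _ _ ha.2
  · rw [← h.1]; exact ha.2.trans (h.1 ▸ h.2)


theorem utilityWith_congr {c : ℝ} {q q' : Fin n → Fin m} {w : Fin n} (hf : q' w = q w)
    (hp : preceders x y q' w = preceders x y q w) :
    utilityWith c x y k q' w = utilityWith c x y k q w := by
  simp only [utilityWith, served_iff, hf, hp]

/-- Whomever `i` overtakes at `b` is also at distance `1`, and whomever `i` leaves behind had at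
least as many preceders as the unserved `i`. -/
theorem utilityWith_one_update_of_far (hd : ∀ w j, |x w - y j| ≤ 1) {q : Fin n → Fin m}
    {i w : Fin n} {b : Fin m} (hw : w ≠ i) (hfar : |x i - y b| = 1)
    (hi : q w = q i → ¬ Served x y k q i) :
    utilityWith 1 x y k (update q i b) w = utilityWith 1 x y k q w := by
  have hqw : update q i b w = q w := update_of_ne hw b q
  by_cases h' : i ∈ preceders x y (update q i b) w
  · rw [mem_preceders, update_self] at h'
    obtain ⟨hb, hprec⟩ := h'
    rw [← hb] at hprec
    have hdw : |x w - y b| = 1 := le_antisymm (hd w b) (hfar ▸ hprec.abs_sub_le)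
    rw [utilityWith_one_of_far (by rwa [← hb]), utilityWith_one_of_far (by rwa [← hqw, ← hb])]
  by_cases h : i ∈ preceders x y q w
  · have hsub := preceders_subset_erase_preceders h
    have hi' : k (q w) ≤ #((preceders x y q w).erase i) := by
      have := hi (mem_preceders.1 h).1.symm
      rw [served_iff, not_lt] at this
      exact (mem_preceders.1 h).1 ▸ this.trans (card_le_card hsub)
    rw [utilityWith_of_not_served, utilityWith_of_not_served]
    · rw [served_iff, not_lt]; exact hi'.trans (card_erase_le)
    · rw [served_iff, not_lt, hqw, ← erase_eq_of_notMem h', erase_preceders_update b hw]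
      exact hi'
  · refine utilityWith_congr hqw ?_
    rw [← erase_eq_of_notMem h', ← erase_eq_of_notMem h, erase_preceders_update b hw]

theorem lt_of_served_of_not_served_update (hd : ∀ w j, |x w - y j| ≤ 1) {q : Fin n → Fin m}
    {i w : Fin n} {b : Fin m} (hw : w ≠ i) (hfar : |x i - y b| = 1)
    (h : Served x y k q w) (h' : ¬ Served x y k (update q i b) w) : i < w := by
  have hqw : update q i b w = q w := update_of_ne hw b q
  have hi : i ∈ preceders x y (update q i b) w := by
    by_contra hi
    refine h' (served_iff.2 ?_)
    rw [← erase_eq_of_notMem hi, erase_preceders_update b hw, hqw]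
    exact (card_erase_le).trans_lt (served_iff.1 h)
  rw [mem_preceders, update_self] at hi
  rw [← hi.1] at hi
  exact hi.2.lt_of_abs_sub_le (hfar ▸ hd w b)

end FarDeviation

noncomputable section Descent

variable {n m : ℕ} {x : Fin n → ℝ} {y : Fin m → ℝ} {k : Fin m → ℕ} {s : Fin n → Fin m}

theorem served_far_of_lt_utilityWith {c : ℝ} (hc : 1 ≤ c) (hd : ∀ w j, |x w - y j| ≤ 1)
    (hs : IsNEWith 1 x y k s) {i : Fin n} {b : Fin m}
    (hib : utilityWith c x y k s i < utilityWith c x y k (update s i b) i) :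
    ¬ Served x y k s i ∧ Served x y k (update s i b) i ∧ |x i - y b| = 1 := by
  have hb : Served x y k (update s i b) i := by
    by_contra hb
    rw [utilityWith_of_not_served hb, utilityWith] at hib
    split_ifs at hib <;> linarith [hd i (s i)]
  have hdev : ∀ c', utilityWith c' x y k (update s i b) i = c' - |x i - y b| := fun c' => by
    rw [utilityWith, if_pos hb, update_self]
  have h1 := hs i b
  rw [hdev] at hib h1
  by_cases hi : Served x y k s i
  · rw [utilityWith, if_pos hi] at hib h1
    linarith
  · rw [utilityWith_of_not_served hi] at h1
    exact ⟨hi, hb, le_antisymm (hd i b) (by linarith)⟩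

theorem utilityWith_one_update_of_far_of_not_served (hd : ∀ w j, |x w - y j| ≤ 1) {i : Fin n}
    {b : Fin m} (hi : ¬ Served x y k s i) (hfar : |x i - y b| = 1) (w : Fin n) :
    utilityWith 1 x y k (update s i b) w = utilityWith 1 x y k s w := by
  by_cases hw : w = i
  · subst hw
    rw [utilityWith_one_of_far (by rwa [update_self]), utilityWith_of_not_served hi]
  · exact utilityWith_one_update_of_far hd hw hfar fun _ => hi

theorem preceders_subset_preceders_update_self {w i : Fin n} (hw : w ≠ i) :
    preceders x y s i ⊆ preceders x y (update s w (s i)) i := by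
  intro a ha
  rw [mem_preceders] at ha ⊢
  rw [update_of_ne hw.symm]
  refine ⟨?_, ha.2⟩
  by_cases haw : a = w
  · rw [haw, update_self]
  · rw [update_of_ne haw, ha.1]

theorem isNEWith_one_update_of_far (hd : ∀ w j, |x w - y j| ≤ 1) (hs : IsNEWith 1 x y k s)
    {i : Fin n} {b : Fin m} (hi : ¬ Served x y k s i) (hfar : |x i - y b| = 1) :
    IsNEWith 1 x y k (update s i b) := by
  intro w j
  rw [utilityWith_one_update_of_far_of_not_served hd hi hfar w]
  by_cases hw : w = i
  · subst hw
    rw [update_idem]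
    exact hs w j
  rw [update_comm (Ne.symm hw)]
  refine (utilityWith_one_update_of_far hd hw hfar fun hj => ?_).trans_le (hs w j)
  rw [update_self, update_of_ne (Ne.symm hw)] at hj
  subst hj
  rw [served_iff, not_lt] at hi ⊢
  rw [update_of_ne (Ne.symm hw)]
  exact hi.trans (card_le_card (preceders_subset_preceders_update_self hw))

def unservedColex (x : Fin n → ℝ) (y : Fin m → ℝ) (k : Fin m → ℕ) (s : Fin n → Fin m) :
    Colex (Finset (Fin n)ᵒᵈ) :=
  toColex ({w | ¬ Served x y k s (OrderDual.ofDual w)} : Finset (Fin n)ᵒᵈ)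

/-- Colex with priority reversed: the agents a far deviation displaces come after the deviator. -/
theorem unservedColex_update_lt (hd : ∀ w j, |x w - y j| ≤ 1) {i : Fin n} {b : Fin m}
    (hi : ¬ Served x y k s i) (hb : Served x y k (update s i b) i) (hfar : |x i - y b| = 1) :
    unservedColex x y k (update s i b) < unservedColex x y k s := by
  rw [unservedColex, unservedColex, Colex.toColex_lt_toColex_iff_exists_forall_lt]
  refine ⟨OrderDual.toDual i, by simpa using hi, by simpa using hb, fun w hw hw' => ?_⟩
  simp only [mem_filter, mem_univ, true_and, not_not] at hw hw'
  have hwi : OrderDual.ofDual w ≠ i := by rintro h; exact hw (h ▸ hb)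
  exact lt_of_served_of_not_served_update hd hwi hfar hw' hw

theorem exists_isNEWith_SWWith_one_eq {c : ℝ} (hc : 1 ≤ c) (hd : ∀ w j, |x w - y j| ≤ 1)
    (hs : IsNEWith 1 x y k s) :
    ∃ t, IsNEWith c x y k t ∧ SWWith 1 x y k t = SWWith 1 x y k s := by
  have : Finite (Colex (Finset (Fin n)ᵒᵈ)) := Finite.of_equiv _ toColex
  induction s using (InvImage.wf (unservedColex x y k) wellFounded_lt).induction with
  | _ s ih =>
  by_cases hc' : IsNEWith c x y k s
  · exact ⟨s, hc', rfl⟩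
  obtain ⟨i, b, hib⟩ : ∃ i b, utilityWith c x y k s i < utilityWith c x y k (update s i b) i := by
    simpa [IsNEWith] using hc'
  obtain ⟨hi, hb, hfar⟩ := served_far_of_lt_utilityWith hc hd hs hib
  obtain ⟨t, ht, hSW⟩ := ih _ (unservedColex_update_lt hd hi hb hfar)
    (isNEWith_one_update_of_far hd hs hi hfar)
  exact ⟨t, ht, hSW.trans (sum_congr rfl fun w _ =>
    utilityWith_one_update_of_far_of_not_served hd hi hfar w)⟩

end Descent

section AxisEmbedding

variable {n m : ℕ}

theorem percLoc_mem_Icc {z : Fin n → ℝ} (hz : InUnit z) (v : ℝ) :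
    percLoc z v ∈ Set.Icc (0 : ℝ) 1 := by
  unfold percLoc sortedVal
  split_ifs
  · exact hz _
  · simp

theorem PM2_embedAxis (V : Fin 2 → Fin m → ℝ) (l : Fin 2) (z : Fin n → ℝ) :
    PM2 V (embedAxis l z) = embedAxis l (fun j => percLoc z (V l j)) := by
  funext j l'
  by_cases h : l' = l
  · subst h
    simp [PM2, embedAxis]
  · simp only [PM2, embedAxis, h, if_false, percLoc, sortedVal]
    split_ifs <;> rfl

theorem dist2_embedAxis {N N' : ℕ} (l : Fin 2) (a : Fin N → ℝ) (b : Fin N' → ℝ) (i : Fin N)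
    (j : Fin N') : dist2 (embedAxis l a i) (embedAxis l b j) = |a i - b j| := by
  fin_cases l <;> simp [dist2, embedAxis, Fin.sum_univ_two, Real.sqrt_sq_eq_abs]

theorem utility2_embedAxis (l : Fin 2) (x : Fin n → ℝ) (y : Fin m → ℝ) (k : Fin m → ℕ)
    (s : Fin n → Fin m) (i : Fin n) :
    utility2 (embedAxis l x) (embedAxis l y) k s i = utilityWith (√2) x y k s i := by
  simp only [utility2, utilityWith, Served, Prec2, Prec, dist2_embedAxis]
  congr

theorem isNE2_embedAxis_iff (l : Fin 2) (x : Fin n → ℝ) (y : Fin m → ℝ) (k : Fin m → ℕ)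
    (s : Fin n → Fin m) :
    isNE2 (embedAxis l x) (embedAxis l y) k s ↔ IsNEWith (√2) x y k s := by
  simp only [isNE2, IsNEWith, utility2_embedAxis]

theorem SW2_embedAxis (l : Fin 2) (x : Fin n → ℝ) (y : Fin m → ℝ) (k : Fin m → ℕ)
    (s : Fin n → Fin m) :
    SW2 (embedAxis l x) (embedAxis l y) k s = SWWith (√2) x y k s := by
  simp only [SW2, SWWith, utility2_embedAxis]

end AxisEmbedding

theorem ES_2dim_implies_ES_coordinates_general (n : ℕ) (k : Fin 2 → ℕ)
    (hkn : k 0 + k 1 < n)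
    (V : Fin 2 → Fin 2 → ℝ)
    (l : Fin 2) (z : Fin n → ℝ) (hz : InUnit z)
    (s s' : Fin n → Fin 2)
    (hs : isNE z (fun j => percLoc z (V l j)) k s)
    (hs' : isNE z (fun j => percLoc z (V l j)) k s')
    (hne : SW z (fun j => percLoc z (V l j)) k s ≠
      SW z (fun j => percLoc z (V l j)) k s') :
    ∃ t t' : Fin n → Fin 2,
      isNE2 (embedAxis l z) (PM2 V (embedAxis l z)) k t ∧
      isNE2 (embedAxis l z) (PM2 V (embedAxis l z)) k t' ∧
      SW2 (embedAxis l z) (PM2 V (embedAxis l z)) k t ≠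
        SW2 (embedAxis l z) (PM2 V (embedAxis l z)) k t' := by
  set y := fun j => percLoc z (V l j)
  have hd : ∀ i j, |z i - y j| ≤ 1 := fun i j =>
    abs_sub_le_of_nonneg_of_le (hz i).1 (hz i).2 (percLoc_mem_Icc hz _).1 (percLoc_mem_Icc hz _).2
  have hk : ∑ j, k j < n := by rwa [Fin.sum_univ_two]
  obtain ⟨t, ht, hts⟩ := exists_isNEWith_SWWith_one_eq Real.one_lt_sqrt_two.le hd
    (isNE_iff_isNEWith_one.1 hs)
  obtain ⟨t', ht', hts'⟩ := exists_isNEWith_SWWith_one_eq Real.one_lt_sqrt_two.le hd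
    (isNE_iff_isNEWith_one.1 hs')
  simp only [PM2_embedAxis, isNE2_embedAxis_iff, SW2_embedAxis]
  refine ⟨t, t', ht, ht', fun h => hne ?_⟩
  rw [SWWith_of_isNEWith Real.one_lt_sqrt_two hd hk ht,
    SWWith_of_isNEWith Real.one_lt_sqrt_two hd hk ht', hts, hts', SWWith_one, SWWith_one] at h
  linarith

/-- If a coordinate percentile mechanism of a 2-dimensional percentile
mechanism admits a one-dimensional instance whose pure Nash equilibria yield different
Social Welfare values, then embedding that instance on the corresponding axis yields a
2-dimensional instance on which the percentile mechanism's output induces pure Nash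
equilibria with different Social Welfare values (so an ES 2-dimensional percentile
mechanism has ES coordinate percentile mechanisms). -/
theorem ES_2dim_implies_ES_coordinates (n : ℕ) (k : Fin 2 → ℕ) (hk : ∀ j, 0 < k j)
    (hkn : k 0 + k 1 < n)
    (V : Fin 2 → Fin 2 → ℝ) (hV : ∀ l j, V l j ∈ Set.Icc (0 : ℝ) 1)
    (l : Fin 2) (z : Fin n → ℝ) (hz : InUnit z)
    (s s' : Fin n → Fin 2)
    (hs : isNE z (fun j => percLoc z (V l j)) k s)
    (hs' : isNE z (fun j => percLoc z (V l j)) k s')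
    (hne : SW z (fun j => percLoc z (V l j)) k s ≠
      SW z (fun j => percLoc z (V l j)) k s') :
    ∃ t t' : Fin n → Fin 2,
      isNE2 (embedAxis l z) (PM2 V (embedAxis l z)) k t ∧
      isNE2 (embedAxis l z) (PM2 V (embedAxis l z)) k t' ∧
      SW2 (embedAxis l z) (PM2 V (embedAxis l z)) k t ≠
        SW2 (embedAxis l z) (PM2 V (embedAxis l z)) k t' :=
  ES_2dim_implies_ES_coordinates_general n k hkn V l z hz s s' hs hs' hne
end
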